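/- arXiv:1503.05852 — 7 statements merged into one kernel-verified Lean document; each statement's English description precedes it below -/
import Mathlib

section
/- The function G(c) = ∫₀^∞ (N(u)/D_c(u))·e^{-u} du is convex in c on (0, ∞). -/
/-!
The denominator `D_c(u)` is affine in `c` with positive coefficients, so for each `u` the
integrand `c ↦ N(u) e^{-u} / D_c(u)` is `x ↦ x⁻¹` composed with an affine map and scaled by a
nonnegative constant, hence convex on `(0, ∞)`. Termwise comparison gives `N ≤ (1 + b/c) D_c`,
so the integrand is dominated by `(1 + b/c) e^{-u}` and integrable, and an integral of convex
functions is convex.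
-/

open Real MeasureTheory

theorem convexOn_integral {α E : Type*} [MeasurableSpace α] {μ : Measure α} [AddCommGroup E]
    [Module ℝ E] {s : Set E} {f : E → α → ℝ} (hs : Convex ℝ s)
    (hf : ∀ᵐ a ∂μ, ConvexOn ℝ s (f · a)) (hint : ∀ x ∈ s, Integrable (f x) μ) :
    ConvexOn ℝ s fun x => ∫ a, f x a ∂μ := by
  refine ⟨hs, fun x hx y hy t r ht hr htr => ?_⟩
  have hx' := (hint x hx).smul t
  have hy' := (hint y hy).smul r
  calc ∫ a, f (t • x + r • y) a ∂μ
      ≤ ∫ a, (t • f x + r • f y) a ∂μ :=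
        integral_mono_ae (hint _ (hs hx hy ht hr htr)) (hx'.add hy')
          (hf.mono fun a ha => ha.2 hx hy ht hr htr)
    _ = t • ∫ a, f x a ∂μ + r • ∫ a, f y a ∂μ := by
        rw [integral_add' hx' hy']
        simp only [Pi.smul_apply, integral_smul]

theorem convexOn_div_add_mul {K : ℝ} (hK : 0 ≤ K) (A B : ℝ) :
    ConvexOn ℝ {c | 0 < A + c * B} fun c => K / (A + c * B) := by
  have h := ((convexOn_zpow (𝕜 := ℝ) (-1)).comp_affineMap
    (AffineMap.lineMap (k := ℝ) A (A + B))).smul hK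
  have hset : AffineMap.lineMap A (A + B) ⁻¹' Set.Ioi 0 = {c : ℝ | 0 < A + c * B} := by
    ext c
    simp [AffineMap.lineMap_apply_ring', add_comm]
  rw [hset] at h
  refine h.congr fun c _ => ?_
  simp [AffineMap.lineMap_apply_ring', div_eq_mul_inv, add_comm]

section

variable {x P Q E F a b c : ℝ}

theorem convexOn_weighted_ratio_mul (hx : 0 < x) (hP : 0 ≤ P) (hQ : 0 ≤ Q) (hE : 0 ≤ E)
    (hF : 0 ≤ F) (ha : 0 ≤ a) (hb : 0 ≤ b) {w : ℝ} (hw : 0 ≤ w) :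
    ConvexOn ℝ (Set.Ioi 0) fun c =>
      (x + P * a * E + Q * b * F) / (x + P * c * E + Q * c * F) * w := by
  have hpos : Set.Ioi 0 ⊆ {c | 0 < x + c * (P * E + Q * F)} := fun c (hc : 0 < c) =>
    show 0 < x + c * (P * E + Q * F) by positivity
  refine ((convexOn_div_add_mul (K := (x + P * a * E + Q * b * F) * w) (by positivity) x
    (P * E + Q * F)).subset hpos (convex_Ioi 0)).congr fun c _ => ?_
  ring

theorem weighted_ratio_le_one_add_div (hx : 0 ≤ x) (hP : 0 ≤ P) (hQ : 0 ≤ Q) (hE : 0 ≤ E)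
    (hF : 0 ≤ F) (hb : 0 ≤ b) (hab : a ≤ b) (hc : 0 < c) :
    (x + P * a * E + Q * b * F) / (x + P * c * E + Q * c * F) ≤ 1 + b / c := by
  refine div_le_of_le_mul₀ (by positivity) (by positivity) ?_
  have hbc : (1 + b / c) * c = c + b := by field_simp
  have hx' : x ≤ (1 + b / c) * x :=
    le_mul_of_one_le_left hx (le_add_of_nonneg_right (by positivity))
  have hPE : P * a * E ≤ P * (c + b) * E := by gcongr; linarith
  have hQF : Q * b * F ≤ Q * (c + b) * F := by gcongr; linarith
  calc x + P * a * E + Q * b * F ≤ (1 + b / c) * x + P * (c + b) * E + Q * (c + b) * F := by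
        linarith
    _ = (1 + b / c) * (x + P * c * E + Q * c * F) := by rw [← hbc]; ring

end

/-- The function `G(c) = ∫₀^∞ (N(u)/D_c(u))·e^{-u} du` defining the combined hazard
ratio of two pooled proportional-hazards trials is convex in `c` on `(0,∞)`. -/
theorem combined_hazard_G_convexOn (a b p q : ℝ) (ha : 0 < a) (hab : a < b)
    (hp : p ∈ Set.Ioo (0 : ℝ) 1) (hq : q ∈ Set.Ioo (0 : ℝ) 1) :
    ConvexOn ℝ (Set.Ioi (0 : ℝ)) (fun c : ℝ =>
      ∫ u in Set.Ioi (0 : ℝ),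
        ((1 - q) * exp (-u) + p * q * a * exp (-(a * u)) + (1 - p) * q * b * exp (-(b * u))) /
          ((1 - q) * exp (-u) + p * q * c * exp (-(a * u)) + (1 - p) * q * c * exp (-(b * u))) *
          exp (-u)) := by
  obtain ⟨hp0, hp1⟩ := hp
  obtain ⟨hq0, hq1⟩ := hq
  have hb : 0 < b := ha.trans hab
  have hp1' : 0 ≤ 1 - p := by linarith
  have hq1' : 0 < 1 - q := by linarith
  refine convexOn_integral (convex_Ioi 0) (ae_of_all _ fun u => ?_) fun c (hc : 0 < c) => ?_
  · exact convexOn_weighted_ratio_mul (by positivity) (by positivity) (by positivity)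
      (by positivity) (by positivity) ha.le hb.le (by positivity)
  · refine (integrableOn_exp_neg_Ioi 0).bdd_mul (c := 1 + b / c)
      (Measurable.aestronglyMeasurable (by fun_prop)) (ae_of_all _ fun u => ?_)
    rw [Real.norm_of_nonneg (by positivity)]
    exact weighted_ratio_le_one_add_div (by positivity) (by positivity) (by positivity)
      (by positivity) (by positivity) hb.le hab.le hc
end

section
/- G(a) > 1; that is, ∫₀^∞ [((1-q)e^{-u} + p·q·a·e^{-a·u} + (1-p)·q·b·e^{-b·u}) / ((1-q)e^{-u} + p·q·a·e^{-a·u} + (1-p)·q·a·e^{-b·u})]·e^{-u} du > 1. -/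
open Real MeasureTheory

/-! With `X = (1-q)e^{-u} + pqa·e^{-au}` and `Y = (1-p)q·e^{-bu}` the integrand is
`(X + bY)/(X + aY) · e^{-u}`. Since `a < b`, the ratio lies in `(1, b/a]`, so integrating it
against the exponential density `e^{-u}`, of total mass `1` on `(0, ∞)`, gives more than `1`. -/

theorem one_lt_add_mul_div_add_mul {X Y a b : ℝ} (hX : 0 ≤ X) (hY : 0 < Y) (ha : 0 < a)
    (hab : a < b) : 1 < (X + b * Y) / (X + a * Y) := by
  rw [one_lt_div (by positivity)]
  nlinarith

theorem add_mul_div_add_mul_le_div {X Y a b : ℝ} (hX : 0 ≤ X) (hY : 0 < Y) (ha : 0 < a)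
    (hab : a ≤ b) : (X + b * Y) / (X + a * Y) ≤ b / a := by
  rw [div_le_div_iff₀ (by positivity) ha]
  nlinarith

theorem one_lt_setIntegral_Ioi_mul_exp_neg {r : ℝ → ℝ} {C : ℝ} (hr : Measurable r)
    (h_one_lt : ∀ u > 0, 1 < r u) (h_le : ∀ u > 0, r u ≤ C) :
    1 < ∫ u in Set.Ioi 0, r u * exp (-u) := by
  have h_exp : IntegrableOn (fun u : ℝ => exp (-u)) (Set.Ioi 0) := integrableOn_exp_neg_Ioi 0
  have h_int : IntegrableOn (fun u => r u * exp (-u)) (Set.Ioi 0) := by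
    refine (h_exp.const_mul C).mono' (by fun_prop) ?_
    filter_upwards [ae_restrict_mem measurableSet_Ioi] with u hu
    rw [norm_mul, norm_of_nonneg (exp_pos _).le, norm_of_nonneg (by linarith [h_one_lt u hu])]
    exact mul_le_mul_of_nonneg_right (h_le u hu) (exp_pos _).le
  have h_excess : ∀ u > 0, 0 < r u * exp (-u) - exp (-u) := fun u hu =>
    sub_pos.2 (lt_mul_of_one_lt_left (exp_pos _) (h_one_lt u hu))
  have h_support : (Function.support fun u => r u * exp (-u) - exp (-u)) ∩ Set.Ioi 0 =
      Set.Ioi 0 :=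
    Set.inter_eq_self_of_subset_right fun u hu => (h_excess u hu).ne'
  rw [← integral_exp_neg_Ioi_zero, ← sub_pos, ← integral_sub h_int h_exp,
    setIntegral_pos_iff_support_of_nonneg_ae (f := fun u => r u * exp (-u) - exp (-u)) _
      (h_int.sub h_exp), h_support, Real.volume_Ioi]
  · exact ENNReal.zero_lt_top
  · filter_upwards [ae_restrict_mem measurableSet_Ioi] with u hu using (h_excess u hu).le

/-- `G(a) > 1`: evaluating the combined-hazard-ratio integral at `c = a` gives a value
strictly greater than `1`. -/
theorem combined_hazard_G_at_a_gt_one (a b p q : ℝ) (ha : 0 < a) (hab : a < b)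
    (hp : p ∈ Set.Ioo (0 : ℝ) 1) (hq : q ∈ Set.Ioo (0 : ℝ) 1) :
    1 < ∫ u in Set.Ioi (0 : ℝ),
        ((1 - q) * exp (-u) + p * q * a * exp (-(a * u)) + (1 - p) * q * b * exp (-(b * u))) /
          ((1 - q) * exp (-u) + p * q * a * exp (-(a * u)) + (1 - p) * q * a * exp (-(b * u))) *
          exp (-u) := by
  obtain ⟨hp0, hp1⟩ := hp
  obtain ⟨hq0, hq1⟩ := hq
  have hX : ∀ u : ℝ, 0 ≤ (1 - q) * exp (-u) + p * q * a * exp (-(a * u)) := fun u => by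
    have : 0 < 1 - q := by linarith
    positivity
  have hY : ∀ u : ℝ, 0 < (1 - p) * q * exp (-(b * u)) := fun u => by
    have : 0 < 1 - p := by linarith
    positivity
  have h_ratio : ∀ u : ℝ,
      ((1 - q) * exp (-u) + p * q * a * exp (-(a * u)) + (1 - p) * q * b * exp (-(b * u))) /
        ((1 - q) * exp (-u) + p * q * a * exp (-(a * u)) + (1 - p) * q * a * exp (-(b * u))) =
      ((1 - q) * exp (-u) + p * q * a * exp (-(a * u)) + b * ((1 - p) * q * exp (-(b * u)))) /
        ((1 - q) * exp (-u) + p * q * a * exp (-(a * u)) + a * ((1 - p) * q * exp (-(b * u)))) :=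
    fun u => by ring
  refine one_lt_setIntegral_Ioi_mul_exp_neg (C := b / a) (by fun_prop) (fun u _ => ?_)
    (fun u _ => ?_) <;> rw [h_ratio]
  · exact one_lt_add_mul_div_add_mul (hX u) (hY u) ha hab
  · exact add_mul_div_add_mul_le_div (hX u) (hY u) ha hab.le
end

section
/- G(c_L) < 1 where c_L = p·a + (1-p)·b; that is, evaluating the integrand with c equal to the linear combination of the hazard ratios makes the integral strictly less than 1. The key pointwise fact is that N(u) - D_{c_L}(u) = p(1-p)q(a-b)(e^{-a·u} - e^{-b·u}) < 0 for all u > 0. -/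
open Real MeasureTheory

/-! Since `D_{c_L}(u) - N(u)` is a positive multiple of `e^{-au} - e^{-bu}`, the weight
`N / D_{c_L}` lies in `[0, 1)` on `(0, ∞)`, so `G(c_L)` integrates the probability density
`e^{-u}` against a weight strictly below `1`. -/

theorem setIntegral_lt_setIntegral_of_forall_lt {α : Type*} [MeasurableSpace α] {μ : Measure α}
    {s : Set α} {f g : α → ℝ} (hs : MeasurableSet s) (hμs : μ s ≠ 0)
    (hf : IntegrableOn f s μ) (hg : IntegrableOn g s μ) (hlt : ∀ x ∈ s, f x < g x) :
    ∫ x in s, f x ∂μ < ∫ x in s, g x ∂μ := by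
  have hsupp : s ⊆ Function.support fun x => g x - f x := fun x hx => (sub_pos.2 (hlt x hx)).ne'
  rw [← sub_pos, ← integral_sub hg hf, setIntegral_pos_iff_support_of_nonneg_ae,
    Set.inter_eq_self_of_subset_right hsupp]
  · exact pos_iff_ne_zero.2 hμs
  · exact (ae_restrict_mem hs).mono fun x hx => (sub_pos.2 (hlt x hx)).le
  · exact hg.sub hf

theorem setIntegral_mul_exp_neg_lt_one {g : ℝ → ℝ}
    (hg : AEStronglyMeasurable g (volume.restrict (Set.Ioi 0)))
    (hg_nonneg : ∀ u ∈ Set.Ioi (0 : ℝ), 0 ≤ g u) (hg_lt : ∀ u ∈ Set.Ioi (0 : ℝ), g u < 1) :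
    ∫ u in Set.Ioi 0, g u * exp (-u) < 1 := by
  have hexp : IntegrableOn (fun u => exp (-u)) (Set.Ioi 0) := by
    simpa using exp_neg_integrableOn_Ioi 0 one_pos
  have hlt : ∀ u ∈ Set.Ioi (0 : ℝ), g u * exp (-u) < exp (-u) := fun u hu =>
    mul_lt_of_lt_one_left (exp_pos _) (hg_lt u hu)
  have hint : IntegrableOn (fun u => g u * exp (-u)) (Set.Ioi 0) := by
    refine hexp.mono' (hg.mul hexp.aestronglyMeasurable) ?_
    filter_upwards [ae_restrict_mem measurableSet_Ioi] with u hu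
    rw [norm_of_nonneg (mul_nonneg (hg_nonneg u hu) (exp_pos _).le)]
    exact (hlt u hu).le
  calc ∫ u in Set.Ioi 0, g u * exp (-u)
      < ∫ u in Set.Ioi 0, exp (-u) :=
        setIntegral_lt_setIntegral_of_forall_lt measurableSet_Ioi (by simp) hint hexp hlt
    _ = 1 := integral_exp_neg_Ioi_zero

theorem sub_mul_exp_neg_mul_sub_neg {a b u : ℝ} (hab : a ≠ b) (hu : 0 < u) :
    (a - b) * (exp (-(a * u)) - exp (-(b * u))) < 0 := by
  rcases hab.lt_or_gt with hab | hab
  · refine mul_neg_of_neg_of_pos (sub_neg.2 hab) (sub_pos.2 (exp_lt_exp.2 ?_))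
    nlinarith
  · refine mul_neg_of_pos_of_neg (sub_pos.2 hab) (sub_neg.2 (exp_lt_exp.2 ?_))
    nlinarith

/-- `G(c_L) < 1` where `c_L = p·a + (1-p)·b`: evaluating the combined-hazard-ratio integral
at the linear hazard-ratio combination gives a value strictly less than `1`.  The key
pointwise fact is `N(u) - D_{c_L}(u) = p(1-p)q(a-b)(e^{-au} - e^{-bu}) < 0` for all `u > 0`. -/
theorem combined_hazard_G_at_linear_lt_one (a b p q : ℝ) (ha : 0 < a) (hab : a < b)
    (hp : p ∈ Set.Ioo (0 : ℝ) 1) (hq : q ∈ Set.Ioo (0 : ℝ) 1) :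
    (∀ u : ℝ, 0 < u →
      ((1 - q) * exp (-u) + p * q * a * exp (-(a * u)) + (1 - p) * q * b * exp (-(b * u))) -
        ((1 - q) * exp (-u) + p * q * (p * a + (1 - p) * b) * exp (-(a * u)) +
          (1 - p) * q * (p * a + (1 - p) * b) * exp (-(b * u)))
        = p * (1 - p) * q * (a - b) * (exp (-(a * u)) - exp (-(b * u))) ∧
      p * (1 - p) * q * (a - b) * (exp (-(a * u)) - exp (-(b * u))) < 0) ∧
    (∫ u in Set.Ioi (0 : ℝ),
        ((1 - q) * exp (-u) + p * q * a * exp (-(a * u)) + (1 - p) * q * b * exp (-(b * u))) /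
          ((1 - q) * exp (-u) + p * q * (p * a + (1 - p) * b) * exp (-(a * u)) +
            (1 - p) * q * (p * a + (1 - p) * b) * exp (-(b * u))) *
          exp (-u)) < 1 := by
  obtain ⟨hp0, hp1⟩ := hp
  obtain ⟨hq0, hq1⟩ := hq
  have h1p : 0 < 1 - p := sub_pos.2 hp1
  have h1q : 0 < 1 - q := sub_pos.2 hq1
  have hb : 0 < b := ha.trans hab
  have hsign : ∀ u : ℝ, 0 < u →
      p * (1 - p) * q * (a - b) * (exp (-(a * u)) - exp (-(b * u))) < 0 := fun u hu => by
    rw [mul_assoc]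
    exact mul_neg_of_pos_of_neg (by positivity) (sub_mul_exp_neg_mul_sub_neg hab.ne hu)
  refine ⟨fun u hu => ⟨by ring, hsign u hu⟩, ?_⟩
  refine setIntegral_mul_exp_neg_lt_one (Measurable.aestronglyMeasurable (by fun_prop))
    (fun u _ => by positivity) fun u hu => (div_lt_one (by positivity)).2 ?_
  linarith [hsign u hu]
end

section
/- For a < c < b and u > 0, the ratio N(u)/D_c(u) is strictly greater than 1 if and only if u < ln[(1-p)(b-c)/(p(c-a))]/(b-a), it equals 1 at u = ln[(1-p)(b-c)/(p(c-a))]/(b-a), and it is strictly less than 1 for larger u. Consequently the function g(u) = (N(u)/D_c(u))·e^{-u} crosses the standard exponential density e^{-u} at exactly one point. -/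
/-!
Writing `e^{-bu} = e^{-au} e^{-(b-a)u}`, the numerator minus the denominator factors as
`q e^{-au} ((1-p)(b-c) e^{-(b-a)u} - p(c-a))`. The denominator is positive, so the ratio
exceeds, equals or falls short of `1` according to the sign of the bracket, which is
strictly decreasing in `u` and vanishes exactly at `ln[(1-p)(b-c)/(p(c-a))]/(b-a)`.
-/

open Real

lemma strictAnti_mul_exp_neg_mul {A k : ℝ} (hA : 0 < A) (hk : 0 < k) :
    StrictAnti fun u => A * exp (-(k * u)) := fun _ _ h =>
  mul_lt_mul_of_pos_left (exp_lt_exp.2 (neg_lt_neg (mul_lt_mul_of_pos_left h hk))) hA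

lemma mul_exp_neg_mul_log_div_div {A B k : ℝ} (hA : 0 < A) (hB : 0 < B) (hk : k ≠ 0) :
    A * exp (-(k * (log (A / B) / k))) = B := by
  rw [mul_div_cancel₀ _ hk, exp_neg, exp_log (div_pos hA hB)]
  field_simp

lemma pooled_hazard_sub_eq (a b c p q u : ℝ) :
    ((1 - q) * exp (-u) + p * q * a * exp (-(a * u)) + (1 - p) * q * b * exp (-(b * u))) -
        ((1 - q) * exp (-u) + p * q * c * exp (-(a * u)) + (1 - p) * q * c * exp (-(b * u))) =
      q * exp (-(a * u)) * ((1 - p) * (b - c) * exp (-((b - a) * u)) - p * (c - a)) := by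
  have hsplit : exp (-(b * u)) = exp (-(a * u)) * exp (-((b - a) * u)) := by
    rw [← exp_add]; ring_nf
  rw [hsplit]; ring

theorem combined_hazard_ratio_single_crossing_general (a b p q c : ℝ) (ha : 0 < a)
    (hp : p ∈ Set.Ioo (0 : ℝ) 1) (hq : q ∈ Set.Ioo (0 : ℝ) 1)
    (hac : a < c) (hcb : c < b) :
    ∀ u : ℝ, 0 < u →
      (1 < ((1 - q) * exp (-u) + p * q * a * exp (-(a * u)) + (1 - p) * q * b * exp (-(b * u))) /
            ((1 - q) * exp (-u) + p * q * c * exp (-(a * u)) + (1 - p) * q * c * exp (-(b * u)))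
        ↔ u < Real.log ((1 - p) * (b - c) / (p * (c - a))) / (b - a)) ∧
      (u = Real.log ((1 - p) * (b - c) / (p * (c - a))) / (b - a) →
        ((1 - q) * exp (-u) + p * q * a * exp (-(a * u)) + (1 - p) * q * b * exp (-(b * u))) /
          ((1 - q) * exp (-u) + p * q * c * exp (-(a * u)) + (1 - p) * q * c * exp (-(b * u)))
          = 1) ∧
      (Real.log ((1 - p) * (b - c) / (p * (c - a))) / (b - a) < u →
        ((1 - q) * exp (-u) + p * q * a * exp (-(a * u)) + (1 - p) * q * b * exp (-(b * u))) /
          ((1 - q) * exp (-u) + p * q * c * exp (-(a * u)) + (1 - p) * q * c * exp (-(b * u)))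
          < 1) := by
  obtain ⟨hp0, hp1⟩ := hp
  obtain ⟨hq0, hq1⟩ := hq
  have hA : 0 < (1 - p) * (b - c) := mul_pos (by linarith) (by linarith)
  have hB : 0 < p * (c - a) := mul_pos hp0 (by linarith)
  have hk : 0 < b - a := by linarith
  have hanti := strictAnti_mul_exp_neg_mul hA hk
  have hcross := mul_exp_neg_mul_log_div_div hA hB hk.ne'
  -- opaque to `rw`, so that `← hcross` below leaves the `p * (c - a)` inside it alone
  set u₀ := log ((1 - p) * (b - c) / (p * (c - a))) / (b - a)
  intro u _
  have hD : 0 < (1 - q) * exp (-u) + p * q * c * exp (-(a * u)) +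
      (1 - p) * q * c * exp (-(b * u)) := by
    have : 0 < c := ha.trans hac
    have : 0 < 1 - q := by linarith
    positivity
  have hw : 0 < q * exp (-(a * u)) := by positivity
  refine ⟨?_, fun h => ?_, fun h => ?_⟩
  · rw [one_lt_div hD, ← sub_pos, pooled_hazard_sub_eq, mul_pos_iff_of_pos_left hw, sub_pos,
      ← hcross]
    exact hanti.lt_iff_gt
  · rw [div_eq_one_iff_eq hD.ne', ← sub_eq_zero, pooled_hazard_sub_eq, h, hcross, sub_self,
      mul_zero]
  · rw [div_lt_one hD, ← sub_neg, pooled_hazard_sub_eq]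
    exact mul_neg_of_pos_of_neg hw (sub_neg.2 (hcross ▸ hanti h))

/-- For `a < c < b`, the ratio `N(u)/D_c(u)` is `> 1` exactly for
`u < u₀ = ln[(1-p)(b-c)/(p(c-a))]/(b-a)`, equals `1` at `u₀`, and is `< 1` beyond `u₀`;
hence `g(u) = (N(u)/D_c(u))·e^{-u}` crosses the standard exponential density `e^{-u}`
at exactly one point. -/
theorem combined_hazard_ratio_single_crossing (a b p q c : ℝ) (ha : 0 < a) (hab : a < b)
    (hp : p ∈ Set.Ioo (0 : ℝ) 1) (hq : q ∈ Set.Ioo (0 : ℝ) 1)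
    (hac : a < c) (hcb : c < b) :
    ∀ u : ℝ, 0 < u →
      (1 < ((1 - q) * exp (-u) + p * q * a * exp (-(a * u)) + (1 - p) * q * b * exp (-(b * u))) /
            ((1 - q) * exp (-u) + p * q * c * exp (-(a * u)) + (1 - p) * q * c * exp (-(b * u)))
        ↔ u < Real.log ((1 - p) * (b - c) / (p * (c - a))) / (b - a)) ∧
      (u = Real.log ((1 - p) * (b - c) / (p * (c - a))) / (b - a) →
        ((1 - q) * exp (-u) + p * q * a * exp (-(a * u)) + (1 - p) * q * b * exp (-(b * u))) /
          ((1 - q) * exp (-u) + p * q * c * exp (-(a * u)) + (1 - p) * q * c * exp (-(b * u)))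
          = 1) ∧
      (Real.log ((1 - p) * (b - c) / (p * (c - a))) / (b - a) < u →
        ((1 - q) * exp (-u) + p * q * a * exp (-(a * u)) + (1 - p) * q * b * exp (-(b * u))) /
          ((1 - q) * exp (-u) + p * q * c * exp (-(a * u)) + (1 - p) * q * c * exp (-(b * u)))
          < 1) :=
  combined_hazard_ratio_single_crossing_general a b p q c ha hp hq hac hcb
end

section
/- Let c* ∈ (a, p·a + (1-p)·b) be the solution of G(c*) = ∫₀^∞ (N(u)/D_{c*}(u))·e^{-u} du = 1. Then for every H > 0, ∫₀^H (N(u)/D_{c*}(u))·e^{-u} du > 1 - e^{-H}. (The distribution with density (N(u)/D_{c*}(u))·e^{-u} is strictly stochastically smaller than the standard exponential distribution.) -/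
open Real MeasureTheory Set

/-! Write `N - D_c = q ((1-p)(b-c) e^{-bu} - p(c-a) e^{-au})`. For `a < c < b` the two
exponentials cross exactly once, so the density `(N/D_c) e^{-u}` lies above `e^{-u}` up to some
`u₀` and below it afterwards. Both have total mass `1`; hence on `(0, H]` the density has more
mass than `e^{-u}`: for `H ≤ u₀` pointwise, for `H > u₀` because its tail beyond `H` is smaller. -/

lemma intervalIntegral_pos_of_sign_change {h : ℝ → ℝ} {l H u₀ : ℝ} (hlH : l < H)
    (hh : IntegrableOn h (Ioi l)) (hzero : ∫ u in Ioi l, h u = 0)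
    (hpos : ∀ u ∈ Ioo l u₀, 0 < h u) (hneg : ∀ u, u₀ < u → h u < 0) :
    0 < ∫ u in l..H, h u := by
  rcases le_or_gt H u₀ with hHu₀ | hu₀H
  · refine intervalIntegral.intervalIntegral_pos_of_pos_on ?_
      (fun u hu => hpos u ⟨hu.1, hu.2.trans_le hHu₀⟩) hlH
    exact (intervalIntegrable_iff_integrableOn_Ioc_of_le hlH.le).2
      (hh.mono_set Ioc_subset_Ioi_self)
  · have hhH : IntegrableOn h (Ioi H) := hh.mono_set (Ioi_subset_Ioi hlH.le)
    have htail : 0 < ∫ u in Ioi H, -h u := by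
      have hnonneg : 0 ≤ᵐ[volume.restrict (Ioi H)] fun u => -h u :=
        (ae_restrict_mem measurableSet_Ioi).mono fun u hu =>
          (neg_pos.2 (hneg u (hu₀H.trans hu))).le
      rw [setIntegral_pos_iff_support_of_nonneg_ae hnonneg hhH.neg]
      have hsupp : Ioi H ⊆ Function.support (fun u => -h u) ∩ Ioi H := fun u hu =>
        ⟨neg_ne_zero.2 (hneg u (hu₀H.trans hu)).ne, hu⟩
      exact (measure_mono hsupp).trans_lt' (by simp)
    rw [integral_neg] at htail
    rw [← intervalIntegral.integral_Ioi_sub_Ioi hh hlH.le, hzero]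
    linarith

lemma intervalIntegral_lt_of_crossing {f g : ℝ → ℝ} {l H u₀ : ℝ} (hlH : l < H)
    (hf : IntegrableOn f (Ioi l)) (hg : IntegrableOn g (Ioi l))
    (hfg : ∫ u in Ioi l, f u = ∫ u in Ioi l, g u)
    (hlt : ∀ u ∈ Ioo l u₀, g u < f u) (hgt : ∀ u, u₀ < u → f u < g u) :
    ∫ u in l..H, g u < ∫ u in l..H, f u := by
  have hpos := intervalIntegral_pos_of_sign_change (h := fun u => f u - g u) (u₀ := u₀) hlH
    (hf.sub hg)
    (by rw [integral_sub hf hg, hfg, sub_self]) (fun u hu => sub_pos.2 (hlt u hu))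
    (fun u hu => sub_neg.2 (hgt u hu))
  have hint : ∀ φ : ℝ → ℝ, IntegrableOn φ (Ioi l) → IntervalIntegrable φ volume l H :=
    fun φ hφ => (intervalIntegrable_iff_integrableOn_Ioc_of_le hlH.le).2
      (hφ.mono_set Ioc_subset_Ioi_self)
  rw [intervalIntegral.integral_sub (hint f hf) (hint g hg)] at hpos
  linarith

lemma exists_crossing_of_exp {a b A B : ℝ} (hab : a < b) (hA : 0 < A) (hB : 0 < B) :
    ∃ u₀, ∀ u, (u < u₀ → A * exp (-(a * u)) < B * exp (-(b * u))) ∧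
      (u₀ < u → B * exp (-(b * u)) < A * exp (-(a * u))) := by
  have hba : 0 < b - a := sub_pos.2 hab
  have hfactor : ∀ u, A * exp (-(a * u)) = A * exp ((b - a) * u) * exp (-(b * u)) := by
    intro u
    rw [mul_assoc, ← exp_add]
    ring_nf
  have hmono : StrictMono fun u => A * exp ((b - a) * u) :=
    (exp_strictMono.comp (strictMono_mul_left_of_pos hba)).const_mul hA
  obtain ⟨u₀, hu₀⟩ : ∃ u₀, A * exp ((b - a) * u₀) = B :=
    ⟨log (B / A) / (b - a), by rw [mul_div_cancel₀ _ hba.ne', exp_log (div_pos hB hA),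
      mul_div_cancel₀ _ hA.ne']⟩
  refine ⟨u₀, fun u => ⟨fun hu => ?_, fun hu => ?_⟩⟩ <;> rw [hfactor, ← hu₀] <;>
    exact mul_lt_mul_of_pos_right (hmono hu) (exp_pos _)

/-- `N = hazardMix a b p q a b` and `D_c = hazardMix a b p q c c`. -/
noncomputable def hazardMix (a b p q α β u : ℝ) : ℝ :=
  (1 - q) * exp (-u) + p * q * α * exp (-(a * u)) + (1 - p) * q * β * exp (-(b * u))

section HazardMix

variable {a b p q α β α' β' : ℝ}

lemma hazardMix_sub_hazardMix (u : ℝ) :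
    hazardMix a b p q α β u - hazardMix a b p q α' β' u =
      q * (p * (α - α') * exp (-(a * u)) + (1 - p) * (β - β') * exp (-(b * u))) := by
  unfold hazardMix
  ring

lemma exists_crossing_hazardMix {c : ℝ} (hp : p ∈ Ioo 0 1) (hq : 0 < q) (hc : c ∈ Ioo a b) :
    ∃ u₀, ∀ u, (u < u₀ → hazardMix a b p q c c u < hazardMix a b p q a b u) ∧
      (u₀ < u → hazardMix a b p q a b u < hazardMix a b p q c c u) := by
  obtain ⟨u₀, hu₀⟩ := exists_crossing_of_exp (hc.1.trans hc.2) (mul_pos hp.1 (sub_pos.2 hc.1))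
    (mul_pos (sub_pos.2 hp.2) (sub_pos.2 hc.2))
  refine ⟨u₀, fun u => ⟨fun hu => ?_, fun hu => ?_⟩⟩ <;>
    rw [← sub_pos, hazardMix_sub_hazardMix] <;> refine mul_pos hq ?_
  · linarith [(hu₀ u).1 hu]
  · linarith [(hu₀ u).2 hu]

lemma hazardMix_pos (hp : p ∈ Icc 0 1) (hq : q ∈ Ico 0 1) (hα : 0 ≤ α) (hβ : 0 ≤ β) (u : ℝ) :
    0 < hazardMix a b p q α β u := by
  obtain ⟨hp₀, hp₁⟩ := hp
  obtain ⟨hq₀, hq₁⟩ := hq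
  have : 0 < 1 - q := sub_pos.2 hq₁
  have : 0 ≤ 1 - p := sub_nonneg.2 hp₁
  unfold hazardMix
  positivity

lemma hazardMix_le_mul {k : ℝ} (hp : p ∈ Icc 0 1) (hq : q ∈ Icc 0 1) (hk : 1 ≤ k)
    (hα : α ≤ k * α') (hβ : β ≤ k * β') (u : ℝ) :
    hazardMix a b p q α β u ≤ k * hazardMix a b p q α' β' u := by
  obtain ⟨hp₀, hp₁⟩ := hp
  obtain ⟨hq₀, hq₁⟩ := hq
  have h₁ : 0 ≤ (k - 1) * ((1 - q) * exp (-u)) := by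
    have := sub_nonneg.2 hk; have := sub_nonneg.2 hq₁; positivity
  have h₂ : 0 ≤ (k * α' - α) * (p * q * exp (-(a * u))) := by
    have := sub_nonneg.2 hα; positivity
  have h₃ : 0 ≤ (k * β' - β) * ((1 - p) * q * exp (-(b * u))) := by
    have := sub_nonneg.2 hβ; have := sub_nonneg.2 hp₁; positivity
  unfold hazardMix
  linarith

lemma integrableOn_hazardMix_div_mul_exp_neg {k : ℝ} (hp : p ∈ Icc 0 1) (hq : q ∈ Ico 0 1)
    (hα : 0 ≤ α) (hβ : 0 ≤ β) (hk : 1 ≤ k) (hαk : α ≤ k * α') (hβk : β ≤ k * β') (l : ℝ) :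
    IntegrableOn (fun u => hazardMix a b p q α β u / hazardMix a b p q α' β' u * exp (-u))
      (Ioi l) := by
  have hk₀ : 0 < k := one_pos.trans_le hk
  have hα' : 0 ≤ α' := (mul_nonneg_iff_of_pos_left hk₀).1 (hα.trans hαk)
  have hβ' : 0 ≤ β' := (mul_nonneg_iff_of_pos_left hk₀).1 (hβ.trans hβk)
  have hbound : ∀ u, ‖hazardMix a b p q α β u / hazardMix a b p q α' β' u * exp (-u)‖ ≤
      k * exp (-u) := by
    intro u
    have hD := hazardMix_pos (a := a) (b := b) hp hq hα' hβ' u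
    rw [norm_of_nonneg (by have := hazardMix_pos (a := a) (b := b) hp hq hα hβ u; positivity)]
    gcongr
    exact div_le_of_le_mul₀ hD.le hk₀.le
      (hazardMix_le_mul hp (Ico_subset_Icc_self hq) hk hαk hβk u)
  refine Integrable.mono' ((integrableOn_exp_neg_Ioi l).const_mul k) ?_ (ae_of_all _ hbound)
  unfold hazardMix
  fun_prop

end HazardMix

/-- If `c* ∈ (a, p·a + (1-p)·b)` solves `G(c*) = 1`, then for every `H > 0` the partial
integral `∫₀^H (N(u)/D_{c*}(u))·e^{-u} du` strictly exceeds `1 - e^{-H}`: the distribution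
with density `(N/D_{c*})·e^{-u}` is strictly stochastically smaller than the standard
exponential distribution. -/
theorem combined_hazard_density_dominates_exponential (a b p q c : ℝ)
    (ha : 0 < a) (hab : a < b)
    (hp : p ∈ Set.Ioo (0 : ℝ) 1) (hq : q ∈ Set.Ioo (0 : ℝ) 1)
    (hc : c ∈ Set.Ioo a (p * a + (1 - p) * b))
    (hroot : (∫ u in Set.Ioi (0 : ℝ),
        ((1 - q) * exp (-u) + p * q * a * exp (-(a * u)) + (1 - p) * q * b * exp (-(b * u))) /
          ((1 - q) * exp (-u) + p * q * c * exp (-(a * u)) + (1 - p) * q * c * exp (-(b * u))) *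
          exp (-u)) = 1) :
    ∀ H : ℝ, 0 < H →
      1 - exp (-H) < ∫ u in Set.Ioc (0 : ℝ) H,
        ((1 - q) * exp (-u) + p * q * a * exp (-(a * u)) + (1 - p) * q * b * exp (-(b * u))) /
          ((1 - q) * exp (-u) + p * q * c * exp (-(a * u)) + (1 - p) * q * c * exp (-(b * u))) *
          exp (-u) := by
  intro H hH
  set f := fun u => hazardMix a b p q a b u / hazardMix a b p q c c u * exp (-u)
  change ∫ u in Ioi 0, f u = 1 at hroot
  change 1 - exp (-H) < ∫ u in Ioc 0 H, f u
  obtain ⟨hca, hcab⟩ := hc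
  have hc₀ : 0 < c := ha.trans hca
  have hcb : c < b := by nlinarith [hp.1, hp.2]
  have hp' := Ioo_subset_Icc_self hp
  have hq' := Ioo_subset_Ico_self hq
  have hf : IntegrableOn f (Ioi 0) :=
    integrableOn_hazardMix_div_mul_exp_neg hp' hq' ha.le (ha.trans hab).le
      ((one_le_div hc₀).2 hcb.le) (by rw [div_mul_cancel₀ _ hc₀.ne']; exact hab.le)
      (by rw [div_mul_cancel₀ _ hc₀.ne']) 0
  obtain ⟨u₀, hu₀⟩ := exists_crossing_hazardMix hp hq.1 ⟨hca, hcb⟩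
  have hD := hazardMix_pos (a := a) (b := b) hp' hq' hc₀.le hc₀.le
  have hexp : ∫ u in (0 : ℝ)..H, exp (-u) = 1 - exp (-H) := by
    rw [← intervalIntegral.integral_Ioi_sub_Ioi (integrableOn_exp_neg_Ioi 0) hH.le,
      integral_exp_neg_Ioi_zero, integral_exp_neg_Ioi]
  rw [← hexp, ← intervalIntegral.integral_of_le hH.le]
  refine intervalIntegral_lt_of_crossing hH hf (integrableOn_exp_neg_Ioi 0)
    (hroot.trans integral_exp_neg_Ioi_zero.symm) (u₀ := u₀) (fun u hu => ?_) (fun u hu => ?_)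
  · exact lt_mul_of_one_lt_left (exp_pos _) ((one_lt_div (hD u)).2 ((hu₀ u).1 hu.2))
  · exact mul_lt_of_lt_one_left (exp_pos _) ((div_lt_one (hD u)).2 ((hu₀ u).2 hu))
end

section
/- Fix H > 0 and let c* ∈ (a, p·a + (1-p)·b) be the unique solution of ∫₀^∞ (N(u)/D_{c*}(u))·e^{-u} du = 1. If c' > 0 satisfies the censored estimating equation ∫₀^H (N(u)/D_{c'}(u))·e^{-u} du = 1 - e^{-H}, then c' > c*. (When the survival data from the two pooled trials are censored at a maximum trial length corresponding to cumulative baseline hazard H, the limit of the pooled maximum partial likelihood hazard-ratio estimator is strictly larger than the uncensored combined hazard ratio, i.e., it carries a positive bias.) -/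
/-!
Write `f_c u = N u / D_c u · e^{-u}`. Since
`N - D_c = q e^{-au} (p (a - c) + (1 - p) (b - c) e^{-(b-a)u})` and the bracket is strictly
decreasing when `c < b`, the difference `f_{c*} - e^{-u}` changes sign at most once, from positive
to negative; by the uncensored equation its integral over `(0, ∞)` is zero. Such a function has
positive integral over every `(0, H]`: either it is nonnegative on all of `(0, H]`, or it is
negative beyond `H`. Hence `∫₀^H f_{c*} > 1 - e^{-H}`. As `f_c` is pointwise decreasing in `c`,
a root `c' ≤ c*` of the censored equation would satisfy `∫₀^H f_{c'} ≥ ∫₀^H f_{c*} > 1 - e^{-H}`.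
-/

open Real MeasureTheory Set

theorem setIntegral_Ioc_pos_of_sign_change {d : ℝ → ℝ} {x₀ H : ℝ} (hH : x₀ < H)
    (hd : IntegrableOn d (Ioi x₀)) (hzero : ∫ u in Ioi x₀, d u = 0)
    (hsign : ∀ u v, x₀ < u → u < v → 0 ≤ d v → 0 < d u) :
    0 < ∫ u in Ioc x₀ H, d u := by
  rcases le_or_gt 0 (d H) with hdH | hdH
  · have hpos : ∀ u ∈ Ioo x₀ H, 0 < d u := fun u hu => hsign u H hu.1 hu.2 hdH
    rw [setIntegral_pos_iff_support_of_nonneg_ae _ (hd.mono_set Ioc_subset_Ioi_self)]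
    · calc (0 : ENNReal) < volume (Ioo x₀ H) := by simpa using hH
        _ ≤ volume (Function.support d ∩ Ioc x₀ H) :=
          measure_mono fun u hu => ⟨(hpos u hu).ne', Ioo_subset_Ioc_self hu⟩
    · filter_upwards [ae_restrict_mem measurableSet_Ioc] with u ⟨hxu, huH⟩
      rcases huH.lt_or_eq with huH | rfl
      exacts [(hpos u ⟨hxu, huH⟩).le, hdH]
  · have hneg : ∀ v ∈ Ioi H, 0 < -d v := fun v hv =>
      neg_pos.2 (not_le.1 fun h => (hsign H v hH hv h).not_gt hdH)
    have htail : 0 < ∫ v in Ioi H, -d v := by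
      rw [setIntegral_pos_iff_support_of_nonneg_ae (f := fun v => -d v) _
        (hd.mono_set (Ioi_subset_Ioi hH.le)).neg]
      · calc (0 : ENNReal) < volume (Ioi H) := by simp
          _ ≤ volume (Function.support (fun v => -d v) ∩ Ioi H) :=
            measure_mono fun v hv => ⟨(hneg v hv).ne', hv⟩
      · filter_upwards [ae_restrict_mem measurableSet_Ioi] with v hv using (hneg v hv).le
    have hsplit : ∫ u in Ioi x₀, d u = (∫ u in Ioc x₀ H, d u) + ∫ u in Ioi H, d u := by
      rw [← setIntegral_union Ioc_disjoint_Ioi_same measurableSet_Ioi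
        (hd.mono_set Ioc_subset_Ioi_self) (hd.mono_set (Ioi_subset_Ioi hH.le)),
        Ioc_union_Ioi_eq_Ioi hH.le]
    rw [integral_neg] at htail
    linarith

namespace CombinedHazard

noncomputable def num (a b p q u : ℝ) : ℝ :=
  (1 - q) * exp (-u) + p * q * a * exp (-(a * u)) + (1 - p) * q * b * exp (-(b * u))

noncomputable def den (a b p q c u : ℝ) : ℝ :=
  (1 - q) * exp (-u) + p * q * c * exp (-(a * u)) + (1 - p) * q * c * exp (-(b * u))

noncomputable def signFactor (a b p c u : ℝ) : ℝ :=
  p * (a - c) + (1 - p) * (b - c) * exp (-((b - a) * u))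

noncomputable def integrand (a b p q c u : ℝ) : ℝ :=
  num a b p q u / den a b p q c u * exp (-u)

variable {a b p q c : ℝ}

theorem num_nonneg (ha : 0 ≤ a) (hb : 0 ≤ b) (hp : p ∈ Ioo (0 : ℝ) 1)
    (hq : q ∈ Ioo (0 : ℝ) 1) (u : ℝ) : 0 ≤ num a b p q u := by
  have := sub_pos.2 hp.2; have := sub_pos.2 hq.2; have := hp.1; have := hq.1
  unfold num; positivity

theorem den_pos (hp : p ∈ Ioo (0 : ℝ) 1) (hq : q ∈ Ioo (0 : ℝ) 1) (hc : 0 < c) (u : ℝ) :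
    0 < den a b p q c u := by
  have := sub_pos.2 hp.2; have := sub_pos.2 hq.2; have := hp.1; have := hq.1
  unfold den; positivity

theorem continuous_den : Continuous (den a b p q c) := by
  unfold den; fun_prop

theorem num_le_mul_den (ha : 0 ≤ a) (hb : 0 ≤ b) (hp : p ∈ Ioo (0 : ℝ) 1)
    (hq : q ∈ Ioo (0 : ℝ) 1) (hc : 0 < c) (u : ℝ) :
    num a b p q u ≤ (1 + (a + b) / c) * den a b p q c u := by
  have := sub_pos.2 hp.2; have := sub_pos.2 hq.2; have := hp.1; have := hq.1
  have hgap : (1 + (a + b) / c) * den a b p q c u - num a b p q u =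
      (a + b) / c * (1 - q) * exp (-u) + p * q * (c + b) * exp (-(a * u))
        + (1 - p) * q * (c + a) * exp (-(b * u)) := by
    unfold num den; field_simp; ring
  have : 0 ≤ (1 + (a + b) / c) * den a b p q c u - num a b p q u := by rw [hgap]; positivity
  linarith

theorem integrableOn_integrand (ha : 0 ≤ a) (hb : 0 ≤ b) (hp : p ∈ Ioo (0 : ℝ) 1)
    (hq : q ∈ Ioo (0 : ℝ) 1) (hc : 0 < c) (x₀ : ℝ) :
    IntegrableOn (integrand a b p q c) (Ioi x₀) := by
  refine (integrableOn_exp_neg_Ioi x₀).bdd_mul (c := 1 + (a + b) / c) ?_ (ae_of_all _ fun u => ?_)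
  · refine (Continuous.div ?_ continuous_den fun u =>
      (den_pos hp hq hc u).ne').aestronglyMeasurable
    unfold num; fun_prop
  · rw [norm_div, Real.norm_of_nonneg (num_nonneg ha hb hp hq u),
      Real.norm_of_nonneg (den_pos hp hq hc u).le, div_le_iff₀ (den_pos hp hq hc u)]
    exact num_le_mul_den ha hb hp hq hc u

theorem integrand_antitone (ha : 0 ≤ a) (hb : 0 ≤ b) (hp : p ∈ Ioo (0 : ℝ) 1)
    (hq : q ∈ Ioo (0 : ℝ) 1) {c' : ℝ} (hc' : 0 < c') (hle : c' ≤ c) (u : ℝ) :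
    integrand a b p q c u ≤ integrand a b p q c' u := by
  have := sub_pos.2 hp.2; have := hp.1; have := hq.1
  have hden : den a b p q c' u ≤ den a b p q c u := by
    unfold den; gcongr
  unfold integrand
  gcongr
  exacts [num_nonneg ha hb hp hq u, den_pos hp hq hc' u]

theorem num_sub_den (u : ℝ) :
    num a b p q u - den a b p q c u =
      q * exp (-(a * u)) * signFactor a b p c u := by
  have : exp (-(b * u)) = exp (-(a * u)) * exp (-((b - a) * u)) := by
    rw [← exp_add]; ring_nf
  unfold num den signFactor; rw [this]; ring

theorem strictAnti_signFactor (hab : a < b) (hp : p < 1) (hcb : c < b) :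
    StrictAnti (signFactor a b p c) := by
  intro u v huv
  have := sub_pos.2 hp; have := sub_pos.2 hcb
  unfold signFactor
  gcongr

theorem integrand_sub_exp_neg (hp : p ∈ Ioo (0 : ℝ) 1) (hq : q ∈ Ioo (0 : ℝ) 1) (hc : 0 < c)
    (u : ℝ) : integrand a b p q c u - exp (-u) =
      q * exp (-(a * u)) * exp (-u) / den a b p q c u * signFactor a b p c u := by
  have hden := (den_pos (a := a) (b := b) hp hq hc u).ne'
  calc integrand a b p q c u - exp (-u)
      = (num a b p q u - den a b p q c u) / den a b p q c u * exp (-u) := by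
        unfold integrand; field_simp
    _ = _ := by rw [num_sub_den]; ring

theorem setIntegral_exp_neg_Ioc {H : ℝ} (hH : 0 ≤ H) :
    ∫ u in Ioc 0 H, exp (-u) = 1 - exp (-H) := by
  rw [← intervalIntegral.integral_of_le hH,
    ← intervalIntegral.integral_Ioi_sub_Ioi (integrableOn_exp_neg_Ioi 0) hH,
    integral_exp_neg_Ioi_zero, integral_exp_neg_Ioi]

theorem one_sub_exp_neg_lt_setIntegral_Ioc (ha : 0 < a) (hab : a < b) (hp : p ∈ Ioo (0 : ℝ) 1)
    (hq : q ∈ Ioo (0 : ℝ) 1) (hac : a < c) (hcb : c < b)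
    (hroot : ∫ u in Ioi 0, integrand a b p q c u = 1) {H : ℝ} (hH : 0 < H) :
    1 - exp (-H) < ∫ u in Ioc 0 H, integrand a b p q c u := by
  have hc := ha.trans hac
  have hI := integrableOn_integrand ha.le (ha.trans hab).le hp hq hc 0
  have hE := integrableOn_exp_neg_Ioi 0
  have hweight (u : ℝ) : 0 < q * exp (-(a * u)) * exp (-u) / den a b p q c u := by
    have := den_pos (a := a) (b := b) hp hq hc u; have := hq.1; positivity
  have hsign (u v : ℝ) (_ : 0 < u) (huv : u < v)
      (hv : 0 ≤ integrand a b p q c v - exp (-v)) : 0 < integrand a b p q c u - exp (-u) := by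
    rw [integrand_sub_exp_neg hp hq hc] at hv ⊢
    have hv := (mul_nonneg_iff_of_pos_left (hweight v)).1 hv
    exact mul_pos (hweight u) (hv.trans_lt (strictAnti_signFactor hab hp.2 hcb huv))
  have hpos := setIntegral_Ioc_pos_of_sign_change (d := fun u => integrand a b p q c u - exp (-u))
    hH (hI.sub hE) (by rw [integral_sub hI hE, hroot, integral_exp_neg_Ioi_zero, sub_self]) hsign
  rw [integral_sub (hI.mono_set Ioc_subset_Ioi_self) (hE.mono_set Ioc_subset_Ioi_self),
    setIntegral_exp_neg_Ioc hH.le] at hpos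
  linarith

theorem setIntegral_Ioc_integrand_antitone (ha : 0 ≤ a) (hb : 0 ≤ b)
    (hp : p ∈ Ioo (0 : ℝ) 1) (hq : q ∈ Ioo (0 : ℝ) 1) {c' : ℝ} (hc' : 0 < c') (hle : c' ≤ c)
    (H : ℝ) :
    ∫ u in Ioc 0 H, integrand a b p q c u ≤ ∫ u in Ioc 0 H, integrand a b p q c' u :=
  setIntegral_mono_on
    ((integrableOn_integrand ha hb hp hq (hc'.trans_le hle) 0).mono_set Ioc_subset_Ioi_self)
    ((integrableOn_integrand ha hb hp hq hc' 0).mono_set Ioc_subset_Ioi_self)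
    measurableSet_Ioc fun u _ => integrand_antitone ha hb hp hq hc' hle u

end CombinedHazard

open CombinedHazard

/-- Positive bias of the censored pooled MPLE: if `c*` is the uncensored combined hazard
ratio, solving `∫₀^∞ (N/D_{c*})·e^{-u} du = 1` with `c* ∈ (a, p·a+(1-p)·b)`, and `c' > 0`
solves the censored estimating equation `∫₀^H (N/D_{c'})·e^{-u} du = 1 - e^{-H}`, then
`c' > c*`. -/
theorem censored_combined_hazard_positive_bias (a b p q H c c' : ℝ)
    (ha : 0 < a) (hab : a < b)
    (hp : p ∈ Set.Ioo (0 : ℝ) 1) (hq : q ∈ Set.Ioo (0 : ℝ) 1) (hH : 0 < H)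
    (hc : c ∈ Set.Ioo a (p * a + (1 - p) * b))
    (hroot : (∫ u in Set.Ioi (0 : ℝ),
        ((1 - q) * exp (-u) + p * q * a * exp (-(a * u)) + (1 - p) * q * b * exp (-(b * u))) /
          ((1 - q) * exp (-u) + p * q * c * exp (-(a * u)) + (1 - p) * q * c * exp (-(b * u))) *
          exp (-u)) = 1)
    (hc' : 0 < c')
    (hroot' : (∫ u in Set.Ioc (0 : ℝ) H,
        ((1 - q) * exp (-u) + p * q * a * exp (-(a * u)) + (1 - p) * q * b * exp (-(b * u))) /
          ((1 - q) * exp (-u) + p * q * c' * exp (-(a * u)) + (1 - p) * q * c' * exp (-(b * u))) *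
          exp (-u)) = 1 - exp (-H)) :
    c < c' := by
  by_contra! hle
  have hcb : c < b := by nlinarith [hc.2, hp.1]
  have hlow := one_sub_exp_neg_lt_setIntegral_Ioc ha hab hp hq hc.1 hcb hroot hH
  have hmono := setIntegral_Ioc_integrand_antitone ha.le (ha.trans hab).le hp hq hc' hle H
  exact (hlow.trans_le hmono).ne' hroot'
end

section
/- Let 0 < a < b, a < 1, p ∈ (0,1), and c > a, and define h(t) = [p·a·e^{-a·t} + (1-p)·b·e^{-b·t} + e^{-t}] / [(p·e^{-a·t} + (1-p)·e^{-b·t})·c + e^{-t}]. Then there exists T > 0 such that h is strictly decreasing on [T, ∞); i.e., for sufficiently large t the limiting pooled Breslow baseline hazard is monotonically decreasing. -/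
/-!
Write `h = N / D`, with `N(t) = p a e^{-at} + (1-p) b e^{-bt} + e^{-t}` the pooled event density and
`D(t) = c (p e^{-at} + (1-p) e^{-bt}) + e^{-t}` the weighted at-risk population. With
`x = e^{-at}`, `y = e^{-bt}`, `z = e^{-t}` one has the identity
`N' D - N D' = -c p (1-p) (a-b)² x y + p (1-a) (a-c) x z + (1-p) (1-b) (b-c) y z`.
The first two terms are negative, and the last is `o(x y)` because `z = o(x)` when `a < 1`;
hence `h' < 0` for all large `t`.
-/

open Real Filter Set

noncomputable def pooledEventDensity (a b p t : ℝ) : ℝ :=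
  p * a * exp (-(a * t)) + (1 - p) * b * exp (-(b * t)) + exp (-t)

noncomputable def weightedAtRisk (a b p c t : ℝ) : ℝ :=
  (p * exp (-(a * t)) + (1 - p) * exp (-(b * t))) * c + exp (-t)

noncomputable def breslowHazard (a b p c t : ℝ) : ℝ :=
  pooledEventDensity a b p t / weightedAtRisk a b p c t

lemma exists_pos_strictAntiOn_Ici_of_eventually_deriv_neg {f f' : ℝ → ℝ}
    (hf : ∀ᶠ t in atTop, HasDerivAt f (f' t) t) (hf' : ∀ᶠ t in atTop, f' t < 0) :
    ∃ T, 0 < T ∧ StrictAntiOn f (Ici T) := by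
  obtain ⟨T₀, hT₀⟩ := eventually_atTop.1 (hf.and hf')
  have hT : ∀ t ∈ Ici (max T₀ 1), HasDerivAt f (f' t) t ∧ f' t < 0 :=
    fun t ht => hT₀ t ((le_max_left _ _).trans ht)
  refine ⟨max T₀ 1, lt_max_of_lt_right one_pos, ?_⟩
  refine strictAntiOn_of_hasDerivWithinAt_neg (f' := f') (convex_Ici _)
    (fun t ht => (hT t ht).1.continuousAt.continuousWithinAt) (fun t ht => ?_) (fun t ht => ?_)
  · exact (hT t (interior_subset ht)).1.hasDerivWithinAt
  · exact (hT t (interior_subset ht)).2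

lemma eventually_mul_exp_neg_lt_mul_exp_neg_mul {a A : ℝ} (ha : a < 1) (hA : 0 < A) (K : ℝ) :
    ∀ᶠ t in atTop, K * exp (-t) < A * exp (-(a * t)) := by
  have hlim : Tendsto (fun t => K * exp ((a - 1) * t)) atTop (nhds 0) := by
    simpa using
      (tendsto_exp_atBot.comp (tendsto_id.const_mul_atTop_of_neg (sub_neg.2 ha))).const_mul K
  filter_upwards [hlim.eventually_lt_const hA] with t ht
  have hsplit : exp (-t) = exp ((a - 1) * t) * exp (-(a * t)) := by
    rw [← exp_add]; ring_nf
  rw [hsplit, ← mul_assoc]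
  exact mul_lt_mul_of_pos_right ht (exp_pos _)

lemma hasDerivAt_exp_neg_mul (r t : ℝ) :
    HasDerivAt (fun t => exp (-(r * t))) (-r * exp (-(r * t))) t := by
  simpa [mul_comm] using ((hasDerivAt_id t).const_mul r).neg.exp

lemma hasDerivAt_pooledEventDensity (a b p t : ℝ) :
    HasDerivAt (pooledEventDensity a b p)
      (-(p * a ^ 2 * exp (-(a * t)) + (1 - p) * b ^ 2 * exp (-(b * t)) + exp (-t))) t := by
  have h := (((hasDerivAt_exp_neg_mul a t).const_mul (p * a)).add
    ((hasDerivAt_exp_neg_mul b t).const_mul ((1 - p) * b))).add (hasDerivAt_exp_neg_mul 1 t)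
  simp only [one_mul, neg_mul] at h
  exact h.congr_deriv (by ring)

lemma hasDerivAt_weightedAtRisk (a b p c t : ℝ) :
    HasDerivAt (weightedAtRisk a b p c)
      (-((p * a * exp (-(a * t)) + (1 - p) * b * exp (-(b * t))) * c + exp (-t))) t := by
  have h := ((((hasDerivAt_exp_neg_mul a t).const_mul p).add
    ((hasDerivAt_exp_neg_mul b t).const_mul (1 - p))).mul_const c).add
    (hasDerivAt_exp_neg_mul 1 t)
  simp only [one_mul, neg_mul] at h
  exact h.congr_deriv (by ring)

lemma weightedAtRisk_pos {a b p c : ℝ} (hp₀ : 0 ≤ p) (hp₁ : p ≤ 1) (hc : 0 ≤ c) (t : ℝ) :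
    0 < weightedAtRisk a b p c t := by
  have hq : 0 ≤ 1 - p := sub_nonneg.2 hp₁
  unfold weightedAtRisk
  positivity

lemma hasDerivAt_breslowHazard {a b p c t : ℝ} (hD : weightedAtRisk a b p c t ≠ 0) :
    HasDerivAt (breslowHazard a b p c)
      ((-(c * p * (1 - p) * (a - b) ^ 2) * exp (-(a * t)) * exp (-(b * t))
        + p * (1 - a) * (a - c) * exp (-(a * t)) * exp (-t)
        + (1 - p) * (1 - b) * (b - c) * exp (-(b * t)) * exp (-t))
        / weightedAtRisk a b p c t ^ 2) t := by
  refine ((hasDerivAt_pooledEventDensity a b p t).div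
    (hasDerivAt_weightedAtRisk a b p c t) hD).congr_deriv ?_
  congr 1
  simp only [pooledEventDensity, weightedAtRisk]
  ring

/-- For `0 < a < b`, `a < 1`, `p ∈ (0,1)` and `c > a`, the limiting pooled Breslow
baseline hazard
`h(t) = [p·a·e^{-at} + (1-p)·b·e^{-bt} + e^{-t}] / [(p·e^{-at} + (1-p)·e^{-bt})·c + e^{-t}]`
is strictly decreasing on `[T, ∞)` for some `T > 0`. -/
theorem breslow_limit_eventually_strictAnti (a b p c : ℝ) (ha : 0 < a) (hab : a < b)
    (ha1 : a < 1) (hp : p ∈ Set.Ioo (0 : ℝ) 1) (hc : a < c) :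
    ∃ T : ℝ, 0 < T ∧ StrictAntiOn
      (fun t : ℝ => (p * a * exp (-(a * t)) + (1 - p) * b * exp (-(b * t)) + exp (-t)) /
        ((p * exp (-(a * t)) + (1 - p) * exp (-(b * t))) * c + exp (-t)))
      (Set.Ici T) := by
  obtain ⟨hp₀, hp₁⟩ := hp
  have hc₀ : 0 < c := ha.trans hc
  have hD := weightedAtRisk_pos (a := a) (b := b) hp₀.le hp₁.le hc₀.le
  have hA : 0 < c * p * (1 - p) * (a - b) ^ 2 := by
    have : a - b ≠ 0 := sub_ne_zero.2 hab.ne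
    have : 0 < 1 - p := sub_pos.2 hp₁
    positivity
  have hB : p * (1 - a) * (a - c) < 0 :=
    mul_neg_of_pos_of_neg (mul_pos hp₀ (sub_pos.2 ha1)) (sub_neg.2 hc)
  show ∃ T, 0 < T ∧ StrictAntiOn (breslowHazard a b p c) (Ici T)
  refine exists_pos_strictAntiOn_Ici_of_eventually_deriv_neg
    (.of_forall fun t => hasDerivAt_breslowHazard (hD t).ne') ?_
  filter_upwards [eventually_mul_exp_neg_lt_mul_exp_neg_mul ha1 hA ((1 - p) * (1 - b) * (b - c))]
    with t ht
  refine div_neg_of_neg_of_pos ?_ (pow_pos (hD t) 2)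
  have hx := exp_pos (-(a * t))
  have hy := exp_pos (-(b * t))
  have hz := exp_pos (-t)
  nlinarith [mul_lt_mul_of_pos_right ht hy, mul_pos hx hz]
end
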